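/- Let φ : ℝ → ℝ be the lift of an orientation-preserving C^∞ diffeomorphism of S¹ (φ is C^∞, φ' > 0, φ(θ+2π) = φ(θ)+2π), and for nonzero integers m, n set I_{n,m} = (1/2π)∫₀^{2π} e^{i(mφ(θ) − nθ)}dθ. Then there exist a constant C > 0 and an integer M₀ such that for every nonzero integer m with |m| ≥ M₀, Σ_{n≠0} |n|·|I_{n,m}|² ≤ C·|m|. -/

import Mathlib

open MeasureTheory

/-- `I_{n,m} = (1/2π) ∫₀^{2π} e^{i(mφ(θ) − nθ)} dθ`, the `n`-th Fourier coefficient of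
`θ ↦ e^{imφ(θ)}`. -/
noncomputable def Icoef (φ : ℝ → ℝ) (n m : ℤ) : ℂ :=
  (1 / (2 * Real.pi)) * ∫ θ in (0:ℝ)..(2 * Real.pi),
    Complex.exp (Complex.I * ((m : ℝ) * φ θ - (n : ℝ) * θ : ℝ))

/-!
Parseval's identity for `θ ↦ e^{imφ(θ)}` gives `Σ_n |I_{n,m}|² = 1`. Since
`φ(θ + 2π) = φ(θ) + 2π`, this function is `2π`-periodic, so the `n`-th coefficient of its
derivative `imφ'e^{imφ}` is `in·I_{n,m}`, and Parseval for the derivative gives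
`Σ_n n²|I_{n,m}|² = m²A` with `A = (1/2π)∫₀^{2π} φ'²`. Now `|n| ≤ (|m| + n²/|m|)/2` bounds the
sum by `(1 + A)|m|/2`, for every `m ≠ 0`.
-/

open Set Complex
open scoped Real

theorem Continuous.memLp_restrict_Ioc {E : Type*} [NormedAddCommGroup E] {f : ℝ → E}
    (hf : Continuous f) (p : ENNReal) (a b : ℝ) : MemLp f p (volume.restrict (Ioc a b)) := by
  obtain ⟨C, hC⟩ := (isCompact_Icc (a := a) (b := b)).exists_bound_of_continuousOn hf.continuousOn
  exact .of_bound hf.aestronglyMeasurable C <|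
    ae_restrict_of_forall_mem measurableSet_Ioc fun x hx => hC x (Ioc_subset_Icc_self hx)

theorem fourierCoeffOn_deriv_of_eq {a b : ℝ} (hab : a < b) {f f' : ℝ → ℂ}
    (hf : ∀ x ∈ uIcc a b, HasDerivAt f (f' x) x) (hf' : IntervalIntegrable f' volume a b)
    (hfab : f b = f a) (n : ℤ) :
    fourierCoeffOn hab f' n = 2 * π * I * n / (b - a) * fourierCoeffOn hab f n := by
  have hba : (b - a : ℂ) ≠ 0 := by exact_mod_cast (sub_pos.mpr hab).ne'
  rcases eq_or_ne n 0 with rfl | hn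
  · simp [fourierCoeffOn_eq_integral, intervalIntegral.integral_eq_sub_of_hasDerivAt hf hf', hfab]
  · rw [fourierCoeffOn_of_hasDerivAt hab hn hf hf', hfab, sub_self, mul_zero, zero_sub]
    have : (n : ℂ) ≠ 0 := Int.cast_ne_zero.mpr hn
    field_simp

theorem norm_fourierCoeffOn_deriv_of_eq {f f' : ℝ → ℂ}
    (hf : ∀ x ∈ uIcc 0 (2 * π), HasDerivAt f (f' x) x)
    (hf' : IntervalIntegrable f' volume 0 (2 * π)) (hf2π : f (2 * π) = f 0) (n : ℤ) :
    ‖fourierCoeffOn Real.two_pi_pos f' n‖ = |(n : ℝ)| * ‖fourierCoeffOn Real.two_pi_pos f n‖ := by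
  rw [fourierCoeffOn_deriv_of_eq _ hf hf' hf2π, ofReal_zero, sub_zero, norm_mul]
  congr 1
  have : (2 * π * I * n / (2 * π : ℝ) : ℂ) = I * n := by
    push_cast; field_simp
  rw [this, norm_mul, norm_I, one_mul, norm_intCast]

noncomputable def phaseExp (φ : ℝ → ℝ) (m : ℤ) (θ : ℝ) : ℂ := exp (I * ((m : ℝ) * φ θ : ℝ))

section phaseExp

variable {φ : ℝ → ℝ} (m : ℤ)

theorem norm_phaseExp (θ : ℝ) : ‖phaseExp φ m θ‖ = 1 := by
  simp [phaseExp, norm_exp]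

theorem continuous_phaseExp (hφ : Continuous φ) : Continuous (phaseExp φ m) := by
  unfold phaseExp; fun_prop

theorem hasDerivAt_phaseExp {θ : ℝ} (hφ : DifferentiableAt ℝ φ θ) :
    HasDerivAt (phaseExp φ m) (I * m * deriv φ θ * phaseExp φ m θ) θ := by
  convert ((hφ.hasDerivAt.const_mul (m : ℝ)).ofReal_comp.const_mul I).cexp using 1
  · rfl
  · rw [phaseExp]
    push_cast
    ring

theorem phaseExp_add_two_pi (hlift : ∀ θ, φ (θ + 2 * π) = φ θ + 2 * π) (θ : ℝ) :
    phaseExp φ m (θ + 2 * π) = phaseExp φ m θ := by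
  have : I * (((m : ℝ) * (φ θ + 2 * π) : ℝ) : ℂ)
      = I * (((m : ℝ) * φ θ : ℝ) : ℂ) + m * (2 * π * I) := by
    push_cast; ring
  rw [phaseExp, phaseExp, hlift, this, exp_add, exp_int_mul_two_pi_mul_I, mul_one]

theorem Icoef_eq_fourierCoeffOn (n : ℤ) :
    Icoef φ n m = fourierCoeffOn Real.two_pi_pos (phaseExp φ m) n := by
  rw [fourierCoeffOn_eq_integral, Icoef, sub_zero, real_smul]
  push_cast
  congr 1
  refine intervalIntegral.integral_congr fun θ _ => ?_
  simp only [fourier_coe_apply, phaseExp, smul_eq_mul, ← exp_add]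
  congr 2
  push_cast
  field_simp
  ring

theorem hasSum_sq_norm_Icoef (hφ : Continuous φ) :
    HasSum (fun n => ‖Icoef φ n m‖ ^ 2) 1 := by
  convert hasSum_sq_fourierCoeffOn Real.two_pi_pos
    ((continuous_phaseExp m hφ).memLp_restrict_Ioc 2 0 (2 * π)) using 1
  · simp_rw [Icoef_eq_fourierCoeffOn]
  · simp only [sub_zero, norm_phaseExp, one_pow, intervalIntegral.integral_const, smul_eq_mul,
      mul_one]
    field_simp

theorem hasSum_sq_mul_sq_norm_Icoef (hφ : ContDiff ℝ 1 φ)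
    (hlift : ∀ θ, φ (θ + 2 * π) = φ θ + 2 * π) :
    HasSum (fun n : ℤ => (n : ℝ) ^ 2 * ‖Icoef φ n m‖ ^ 2)
      ((m : ℝ) ^ 2 * ((2 * π)⁻¹ * ∫ θ in 0..2 * π, deriv φ θ ^ 2)) := by
  set f' : ℝ → ℂ := fun θ => I * m * deriv φ θ * phaseExp φ m θ
  have hf' : Continuous f' := by
    have := hφ.continuous_deriv le_rfl
    have := continuous_phaseExp m hφ.continuous
    fun_prop
  have hderiv : ∀ θ ∈ uIcc 0 (2 * π), HasDerivAt (phaseExp φ m) (f' θ) θ := fun θ _ =>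
    hasDerivAt_phaseExp m (hφ.differentiable one_ne_zero θ)
  have hper : phaseExp φ m (2 * π) = phaseExp φ m 0 := by
    simpa using phaseExp_add_two_pi m hlift 0
  convert hasSum_sq_fourierCoeffOn Real.two_pi_pos (hf'.memLp_restrict_Ioc 2 0 (2 * π)) using 1
  · ext n
    rw [norm_fourierCoeffOn_deriv_of_eq hderiv (hf'.intervalIntegrable _ _) hper,
      Icoef_eq_fourierCoeffOn, mul_pow, sq_abs]
  · simp only [f', sub_zero, norm_mul, norm_I, norm_intCast, norm_real, Real.norm_eq_abs,
      norm_phaseExp, one_mul, mul_one, mul_pow, sq_abs, intervalIntegral.integral_const_mul,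
      smul_eq_mul]
    ring

end phaseExp

theorem tsum_ofReal_abs_mul_le {c : ℤ → ℝ} {a b : ℝ} (hc : ∀ n, 0 ≤ c n) (ha : HasSum c a)
    (hb : HasSum (fun n : ℤ => (n : ℝ) ^ 2 * c n) b) {M : ℝ} (hM : 0 < M) :
    ∑' n : ℤ, ENNReal.ofReal (|(n : ℝ)| * c n) ≤ ENNReal.ofReal ((M * a + b / M) / 2) := by
  have hpoint : ∀ n : ℤ, |(n : ℝ)| * c n ≤ (M * c n + (n : ℝ) ^ 2 * c n / M) / 2 := by
    intro n
    rw [le_div_iff₀ two_pos, ← sq_abs (n : ℝ), add_div' _ _ _ hM.ne', le_div_iff₀ hM]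
    nlinarith [mul_nonneg (hc n) (sq_nonneg (M - |(n : ℝ)|))]
  have hsum : HasSum (fun n : ℤ => (M * c n + (n : ℝ) ^ 2 * c n / M) / 2) ((M * a + b / M) / 2) :=
    ((ha.mul_left M).add (hb.div_const M)).div_const 2
  calc ∑' n : ℤ, ENNReal.ofReal (|(n : ℝ)| * c n)
      ≤ ∑' n : ℤ, ENNReal.ofReal ((M * c n + (n : ℝ) ^ 2 * c n / M) / 2) :=
        ENNReal.tsum_le_tsum fun n => ENNReal.ofReal_le_ofReal (hpoint n)
    _ = ENNReal.ofReal ((M * a + b / M) / 2) := by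
        rw [← ENNReal.ofReal_tsum_of_nonneg (fun n => by have := hc n; positivity) hsum.summable,
          hsum.tsum_eq]

theorem rows_uniform_bound_general (φ : ℝ → ℝ) (hφ : ContDiff ℝ (⊤ : ℕ∞) φ)
    (hlift : ∀ θ, φ (θ + 2 * Real.pi) = φ θ + 2 * Real.pi) :
    ∃ C : ℝ, 0 < C ∧ ∃ M₀ : ℤ, ∀ m : ℤ, m ≠ 0 → M₀ ≤ |m| →
      (∑' n : ℤ, if n = 0 then 0 else
          ENNReal.ofReal ((|n| : ℝ) * ‖Icoef φ n m‖ ^ 2))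
        ≤ ENNReal.ofReal (C * (|m| : ℝ)) := by
  have hφ1 : ContDiff ℝ 1 φ := hφ.of_le (by exact_mod_cast le_top)
  set A : ℝ := (2 * π)⁻¹ * ∫ θ in 0..2 * π, deriv φ θ ^ 2
  have hA : 0 ≤ A := by
    have := intervalIntegral.integral_nonneg (μ := volume) Real.two_pi_pos.le
      fun θ _ => sq_nonneg (deriv φ θ)
    positivity
  refine ⟨(1 + A) / 2, by positivity, 0, fun m hm _ => ?_⟩
  have hM : 0 < |(m : ℝ)| := abs_pos.mpr (Int.cast_ne_zero.mpr hm)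
  have hderiv : HasSum (fun n : ℤ => (n : ℝ) ^ 2 * ‖Icoef φ n m‖ ^ 2) ((m : ℝ) ^ 2 * A) :=
    hasSum_sq_mul_sq_norm_Icoef m hφ1 hlift
  have hbound := tsum_ofReal_abs_mul_le (fun n => sq_nonneg ‖Icoef φ n m‖)
    (hasSum_sq_norm_Icoef m hφ.continuous) hderiv hM
  convert hbound using 2
  · ext n
    split_ifs with hn <;> simp [hn]
  · rw [← sq_abs (m : ℝ)]
    field_simp

/-- For a lift `φ` of an orientation-preserving `C^∞` diffeomorphism of `S¹`, there are a
constant `C > 0` and an integer `M₀` such that for all `m ≠ 0` with `|m| ≥ M₀` one has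
`Σ_{n≠0} |n|·|I_{n,m}|² ≤ C·|m|` (the sum on the left being finite). -/
theorem rows_uniform_bound (φ : ℝ → ℝ) (hφ : ContDiff ℝ (⊤ : ℕ∞) φ)
    (hφ' : ∀ θ, 0 < deriv φ θ) (hlift : ∀ θ, φ (θ + 2 * Real.pi) = φ θ + 2 * Real.pi) :
    ∃ C : ℝ, 0 < C ∧ ∃ M₀ : ℤ, ∀ m : ℤ, m ≠ 0 → M₀ ≤ |m| →
      (∑' n : ℤ, if n = 0 then 0 else
          ENNReal.ofReal ((|n| : ℝ) * ‖Icoef φ n m‖ ^ 2))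
        ≤ ENNReal.ofReal (C * (|m| : ℝ)) :=
  rows_uniform_bound_general φ hφ hlift
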